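/- There exists an absolute constant C > 0 such that for every β ∈ [1.9, 2] and every x ∈ (0, 1/2): W_{1,β}''(x) ≥ β/x² − C/x, where W_{1,β}(x) = K̃_{1,β}(e^x). -/

import Mathlib

open Real Set

/-- The kernel `K̃_{1,β}(s)` from (4.10). -/
noncomputable def Ktilde1 (β s : ℝ) : ℝ :=
  (β / 2) * (s ^ ((β + 1) / 2) + s ^ (-((β + 1) / 2))) * Real.log |(s + 1) / (s - 1)|
    - 2 * s * (s ^ ((β + 1) / 2) - s ^ (-((β + 1) / 2))) / (s ^ 2 - 1)
    + (2 - β) * (s ^ ((β - 1) / 2) + s ^ ((1 - β) / 2))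

/-- `W_{1,β}(x) = K̃_{1,β}(e^x)`. -/
noncomputable def W1 (β x : ℝ) : ℝ := Ktilde1 β (Real.exp x)

/-!
For `x > 0`, writing `a = (β+1)/2` and `b = (β-1)/2`,
`W_{1,β}(x) = β cosh(ax) log coth(x/2) - 2 sinh(ax)/sinh x + 2(2-β) cosh(bx)`,
and `(log coth(x/2))' = -1/sinh x`. In the second derivative the only singular term is
`β cosh(ax) cosh x / sinh² x`, which is at least `β/x²` because `tanh x ≤ x` and `a ≥ 1`.
Every other term is either nonnegative (for the one carrying `a cosh(ax) sinh x - sinh(ax) cosh x`,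
this numerator vanishes at `0` and has derivative `(a²-1) sinh(ax) sinh x ≥ 0`) or a bounded
multiple of `sinh(ax)/sinh x ≤ a cosh(ax)`, which is bounded for `x < 1/2`.
-/

lemma deriv_deriv_eq_of_eqOn {f g g' g'' : ℝ → ℝ} {s : Set ℝ} (hfg : EqOn f g s)
    (hs : IsOpen s) (hg : ∀ y ∈ s, HasDerivAt g (g' y) y)
    (hg' : ∀ y ∈ s, HasDerivAt g' (g'' y) y) {x : ℝ} (hx : x ∈ s) :
    deriv (deriv f) x = g'' x := by
  have hderiv : EqOn (deriv f) g' s := fun y hy => (hfg.deriv hs hy).trans (hg y hy).deriv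
  rw [hderiv.deriv hs hx, (hg' x hx).deriv]

lemma apply_zero_le_of_hasDerivAt_nonneg {f f' : ℝ → ℝ} (hf : ∀ t, HasDerivAt f (f' t) t)
    (hf' : ∀ t, 0 < t → 0 ≤ f' t) {x : ℝ} (hx : 0 ≤ x) : f 0 ≤ f x := by
  have hmono : MonotoneOn f (Ici 0) := by
    refine monotoneOn_of_hasDerivWithinAt_nonneg (convex_Ici 0)
      (fun t _ => (hf t).continuousAt.continuousWithinAt)
      (fun t _ => (hf t).hasDerivWithinAt) fun t ht => hf' t ?_
    simpa only [interior_Ici, mem_Ioi] using ht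
  exact hmono self_mem_Ici hx hx

namespace Real

lemma sinh_eq_exp_sq_sub_one_div (x : ℝ) : sinh x = (exp x ^ 2 - 1) / (2 * exp x) := by
  rw [sinh_eq, exp_neg]
  field_simp

lemma exp_rpow_add_exp_rpow_neg (x p : ℝ) : exp x ^ p + exp x ^ (-p) = 2 * cosh (p * x) := by
  rw [← exp_mul, ← exp_mul, cosh_eq, mul_neg, mul_comm x]
  ring

lemma exp_rpow_sub_exp_rpow_neg (x p : ℝ) : exp x ^ p - exp x ^ (-p) = 2 * sinh (p * x) := by
  rw [← exp_mul, ← exp_mul, sinh_eq, mul_neg, mul_comm x]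
  ring

lemma hasDerivAt_cosh_mul (a x : ℝ) : HasDerivAt (fun y => cosh (a * y)) (a * sinh (a * x)) x := by
  simpa [mul_comm] using ((hasDerivAt_id x).const_mul a).cosh

lemma hasDerivAt_sinh_mul (a x : ℝ) : HasDerivAt (fun y => sinh (a * y)) (a * cosh (a * x)) x := by
  simpa [mul_comm] using ((hasDerivAt_id x).const_mul a).sinh

lemma sinh_le_mul_cosh {x : ℝ} (hx : 0 ≤ x) : sinh x ≤ x * cosh x := by
  have hderiv (t : ℝ) : HasDerivAt (fun t => t * cosh t - sinh t) (t * sinh t) t := by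
    refine (((hasDerivAt_id t).mul (hasDerivAt_cosh t)).sub (hasDerivAt_sinh t)).congr_deriv ?_
    simp only [id, one_mul]
    ring
  have := apply_zero_le_of_hasDerivAt_nonneg hderiv
    (fun t ht => mul_nonneg ht.le (sinh_nonneg_iff.2 ht.le)) hx
  simpa using this

end Real

namespace W1

variable {a x : ℝ}

noncomputable def logCothHalf (x : ℝ) : ℝ := log (exp x + 1) - log (exp x - 1)

lemma hasDerivAt_logCothHalf (hx : 0 < x) : HasDerivAt logCothHalf (-(sinh x)⁻¹) x := by
  have he : 1 < exp x := one_lt_exp_iff.2 hx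
  refine ((((hasDerivAt_exp x).add_const 1).log (by positivity)).sub
    (((hasDerivAt_exp x).sub_const 1).log (by linarith))).congr_deriv ?_
  have : exp x - 1 ≠ 0 := by linarith
  have : exp x ^ 2 - 1 ≠ 0 := by nlinarith
  rw [sinh_eq_exp_sq_sub_one_div]
  field_simp
  ring

lemma logCothHalf_nonneg (hx : 0 < x) : 0 ≤ logCothHalf x := by
  have he : 1 < exp x := one_lt_exp_iff.2 hx
  exact sub_nonneg.2 (log_le_log (by linarith) (by linarith))

noncomputable def coshMulLog (a y : ℝ) : ℝ := cosh (a * y) * logCothHalf y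

noncomputable def coshMulLogDeriv (a y : ℝ) : ℝ :=
  a * sinh (a * y) * logCothHalf y - cosh (a * y) / sinh y

noncomputable def sinhRatio (a y : ℝ) : ℝ := sinh (a * y) / sinh y

noncomputable def coshMulLogDeriv2 (a y : ℝ) : ℝ :=
  a ^ 2 * cosh (a * y) * logCothHalf y - 2 * a * sinhRatio a y
    + cosh (a * y) * cosh y / sinh y ^ 2

noncomputable def sinhRatioNum (a y : ℝ) : ℝ := a * cosh (a * y) * sinh y - sinh (a * y) * cosh y

noncomputable def sinhRatioDeriv (a y : ℝ) : ℝ := sinhRatioNum a y / sinh y ^ 2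

noncomputable def sinhRatioDeriv2 (a y : ℝ) : ℝ :=
  (a ^ 2 - 1) * sinhRatio a y - 2 * cosh y * sinhRatioNum a y / sinh y ^ 3

lemma hasDerivAt_coshMulLog (hx : 0 < x) : HasDerivAt (coshMulLog a) (coshMulLogDeriv a x) x := by
  refine ((hasDerivAt_cosh_mul a x).mul (hasDerivAt_logCothHalf hx)).congr_deriv ?_
  rw [coshMulLogDeriv]
  ring

lemma hasDerivAt_coshMulLogDeriv (hx : 0 < x) :
    HasDerivAt (coshMulLogDeriv a) (coshMulLogDeriv2 a x) x := by
  have hs : sinh x ≠ 0 := (sinh_pos_iff.2 hx).ne'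
  refine ((((hasDerivAt_sinh_mul a x).const_mul a).mul (hasDerivAt_logCothHalf hx)).sub
    ((hasDerivAt_cosh_mul a x).div (hasDerivAt_sinh x) hs)).congr_deriv ?_
  rw [coshMulLogDeriv2, sinhRatio]
  field_simp
  ring

lemma hasDerivAt_sinhRatio (hx : 0 < x) : HasDerivAt (sinhRatio a) (sinhRatioDeriv a x) x := by
  have hs : sinh x ≠ 0 := (sinh_pos_iff.2 hx).ne'
  refine ((hasDerivAt_sinh_mul a x).div (hasDerivAt_sinh x) hs).congr_deriv ?_
  rw [sinhRatioDeriv, sinhRatioNum]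

lemma hasDerivAt_sinhRatioNum (a x : ℝ) :
    HasDerivAt (sinhRatioNum a) ((a ^ 2 - 1) * sinh (a * x) * sinh x) x := by
  refine ((((hasDerivAt_cosh_mul a x).const_mul a).mul (hasDerivAt_sinh x)).sub
    ((hasDerivAt_sinh_mul a x).mul (hasDerivAt_cosh x))).congr_deriv ?_
  ring

lemma hasDerivAt_sinhRatioDeriv (hx : 0 < x) :
    HasDerivAt (sinhRatioDeriv a) (sinhRatioDeriv2 a x) x := by
  have hs : sinh x ≠ 0 := (sinh_pos_iff.2 hx).ne'
  refine ((hasDerivAt_sinhRatioNum a x).div ((hasDerivAt_sinh x).pow 2)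
    (pow_ne_zero 2 hs)).congr_deriv ?_
  rw [sinhRatioDeriv2, sinhRatio, Pi.pow_apply]
  field_simp
  ring

lemma sinhRatioNum_nonneg (ha : 1 ≤ a) (hx : 0 ≤ x) : 0 ≤ sinhRatioNum a x := by
  have h := apply_zero_le_of_hasDerivAt_nonneg (hasDerivAt_sinhRatioNum a) (fun t ht => by
    have : 0 ≤ a ^ 2 - 1 := by nlinarith
    have : 0 ≤ sinh (a * t) := sinh_nonneg_iff.2 (by positivity)
    have : 0 ≤ sinh t := sinh_nonneg_iff.2 ht.le
    positivity) hx
  simpa [sinhRatioNum] using h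

lemma sinhRatio_le (ha : 0 ≤ a) (hx : 0 < x) : sinhRatio a x ≤ a * cosh (a * x) := by
  have hs : 0 < sinh x := sinh_pos_iff.2 hx
  rw [sinhRatio, div_le_iff₀ hs]
  calc sinh (a * x) ≤ a * x * cosh (a * x) := sinh_le_mul_cosh (by positivity)
    _ ≤ a * sinh x * cosh (a * x) := by
        gcongr
        exact self_le_sinh_iff.2 hx.le
    _ = a * cosh (a * x) * sinh x := by ring

lemma sinhRatio_nonneg (ha : 0 ≤ a) (hx : 0 ≤ x) : 0 ≤ sinhRatio a x :=
  div_nonneg (sinh_nonneg_iff.2 (mul_nonneg ha hx)) (sinh_nonneg_iff.2 hx)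

lemma sinhRatio_le_three_mul (ha : 0 ≤ a) (hx : 0 < x) (hax : a * x ≤ 1) :
    sinhRatio a x ≤ 3 * a := by
  have hcosh : cosh (a * x) ≤ 3 :=
    calc cosh (a * x) ≤ exp ((a * x) ^ 2 / 2) := cosh_le_exp_half_sq _
      _ ≤ exp 1 := exp_le_exp.2 (by nlinarith [mul_nonneg ha hx.le])
      _ ≤ 3 := exp_one_lt_three.le
  nlinarith [sinhRatio_le ha hx]

lemma inv_sq_le_cosh_mul_cosh_div_sinh_sq (ha : 1 ≤ a) (hx : 0 < x) :
    1 / x ^ 2 ≤ cosh (a * x) * cosh x / sinh x ^ 2 := by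
  have hs : 0 < sinh x := sinh_pos_iff.2 hx
  have hcosh : cosh x ≤ cosh (a * x) := by
    rw [cosh_le_cosh, abs_of_pos hx, abs_of_pos (by positivity)]
    nlinarith
  have hsinh : sinh x ≤ x * cosh x := sinh_le_mul_cosh hx.le
  rw [div_le_div_iff₀ (by positivity) (by positivity)]
  calc 1 * sinh x ^ 2 ≤ (x * cosh x) ^ 2 := by rw [one_mul]; gcongr
    _ ≤ cosh (a * x) * cosh x * x ^ 2 := by
        have := cosh_pos x
        rw [mul_pow, sq (cosh x)]
        nlinarith [mul_le_mul_of_nonneg_left hcosh (mul_nonneg (sq_nonneg x) this.le)]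

lemma inv_sq_sub_le_coshMulLogDeriv2 (ha : 1 ≤ a) (hx : 0 < x) :
    1 / x ^ 2 - 2 * a * sinhRatio a x ≤ coshMulLogDeriv2 a x := by
  have hlog : 0 ≤ a ^ 2 * cosh (a * x) * logCothHalf x :=
    mul_nonneg (by positivity) (logCothHalf_nonneg hx)
  have := inv_sq_le_cosh_mul_cosh_div_sinh_sq ha hx
  rw [coshMulLogDeriv2]
  linarith

lemma sinhRatioDeriv2_le (ha : 1 ≤ a) (hx : 0 < x) :
    sinhRatioDeriv2 a x ≤ (a ^ 2 - 1) * sinhRatio a x := by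
  have : 0 ≤ 2 * cosh x * sinhRatioNum a x / sinh x ^ 3 := by
    have := sinhRatioNum_nonneg ha hx.le
    have := sinh_pos_iff.2 hx
    positivity
  rw [sinhRatioDeriv2]
  linarith

lemma eqOn_Ioi (β : ℝ) :
    EqOn (W1 β) (fun y => β * coshMulLog ((β + 1) / 2) y - 2 * sinhRatio ((β + 1) / 2) y
      + 2 * (2 - β) * cosh ((β - 1) / 2 * y)) (Ioi 0) := by
  intro x hx
  have he : 1 < exp x := one_lt_exp_iff.2 hx
  have hlog : log |(exp x + 1) / (exp x - 1)| = logCothHalf x := by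
    rw [log_abs, log_div (by positivity) (by linarith), logCothHalf]
  have : exp x ^ 2 - 1 ≠ 0 := by nlinarith
  have hneg : (1 - β) / 2 = -((β - 1) / 2) := by ring
  simp only [W1, Ktilde1]
  rw [exp_rpow_add_exp_rpow_neg, exp_rpow_sub_exp_rpow_neg, hneg, exp_rpow_add_exp_rpow_neg, hlog,
    coshMulLog, sinhRatio, sinh_eq_exp_sq_sub_one_div x]
  field_simp

lemma deriv_deriv_eq (β : ℝ) (hx : 0 < x) :
    deriv (deriv (W1 β)) x = β * coshMulLogDeriv2 ((β + 1) / 2) x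
      - 2 * sinhRatioDeriv2 ((β + 1) / 2) x
      + 2 * (2 - β) * (((β - 1) / 2) ^ 2 * cosh ((β - 1) / 2 * x)) := by
  refine deriv_deriv_eq_of_eqOn (eqOn_Ioi β) isOpen_Ioi (fun y hy => ?_)
    (g' := fun y => β * coshMulLogDeriv ((β + 1) / 2) y - 2 * sinhRatioDeriv ((β + 1) / 2) y
      + 2 * (2 - β) * ((β - 1) / 2 * sinh ((β - 1) / 2 * y)))
    (g'' := fun y => β * coshMulLogDeriv2 ((β + 1) / 2) y - 2 * sinhRatioDeriv2 ((β + 1) / 2) y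
      + 2 * (2 - β) * (((β - 1) / 2) ^ 2 * cosh ((β - 1) / 2 * y))) (fun y hy => ?_) hx
  · exact (((hasDerivAt_coshMulLog hy).const_mul β).sub ((hasDerivAt_sinhRatio hy).const_mul 2)).add
      ((hasDerivAt_cosh_mul _ y).const_mul _)
  · refine (((hasDerivAt_coshMulLogDeriv hy).const_mul β).sub
      ((hasDerivAt_sinhRatioDeriv hy).const_mul 2)).add
      (((hasDerivAt_sinh_mul _ y).const_mul _).const_mul _) |>.congr_deriv ?_
    ring

end W1

open W1 in
/-- Estimate (A.11) from the proof of Lemma 4.2: there is an absolute constant `C`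
such that `W_{1,β}''(x) ≥ β/x² - C/x` for all `β ∈ [1.9, 2]` and `x ∈ (0, 1/2)`. -/
theorem W1_second_deriv_lower_bound :
    ∃ C : ℝ, 0 < C ∧
      ∀ β ∈ Icc (1.9 : ℝ) 2, ∀ x ∈ Ioo (0 : ℝ) (1 / 2),
        β / x ^ 2 - C / x ≤ deriv (deriv (W1 β)) x := by
  refine ⟨40, by norm_num, fun β ⟨hβ₁, hβ₂⟩ x ⟨hx₀, hx₁⟩ => ?_⟩
  rw [W1.deriv_deriv_eq β hx₀]
  set a := (β + 1) / 2 with ha_def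
  have ha : 1 ≤ a := by linarith
  have hr₀ := sinhRatio_nonneg (by linarith) hx₀.le (a := a)
  have hr : sinhRatio a x ≤ 9 / 2 := by
    have := sinhRatio_le_three_mul (by linarith) hx₀ (by nlinarith) (a := a)
    linarith
  have hcoef : (β * (2 * a) + 2 * (a ^ 2 - 1)) * sinhRatio a x ≤ 40 := by
    have : β * (2 * a) + 2 * (a ^ 2 - 1) ≤ 17 / 2 := by nlinarith
    nlinarith [mul_le_mul this hr hr₀ (by norm_num)]
  have hP := mul_le_mul_of_nonneg_left (inv_sq_sub_le_coshMulLogDeriv2 ha hx₀)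
    (by linarith : 0 ≤ β)
  have hQ := sinhRatioDeriv2_le ha hx₀
  have hR : 0 ≤ 2 * (2 - β) * (((β - 1) / 2) ^ 2 * cosh ((β - 1) / 2 * x)) := by
    have := cosh_pos ((β - 1) / 2 * x)
    have : 0 ≤ 2 - β := by linarith
    positivity
  have hC : 40 ≤ 40 / x := by rw [le_div_iff₀ hx₀]; linarith
  rw [div_eq_mul_one_div β]
  linarith
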